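/- arXiv:1705.07579 — 2 statements merged into one kernel-verified Lean document; each statement's English description precedes it below -/
import Mathlib

section
/- Let X be a compact subset of [0,1] and f₀ : X → [0,1] a C¹ map satisfying: there exist c > 0 and λ > 1 such that for every n ≥ 1 and every x with x, f₀(x), …, f₀^{n-1}(x) ∈ X, one has |Df₀^n(x)| ≥ cλ^n. Then there exist ε₀ > 0, c₀ > 0 and λ₀ > 1 such that for every C¹ map f : X → [0,1] with ‖f₀ − f‖_{C¹} ≤ ε₀, and every x ∈ X and n ≥ 1 with x, f(x), …, f^{n-1}(x) ∈ X, one has |Df^n(x)| ≥ c₀λ₀^n. -/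
/-!
Since `|f₀'| ≥ c λ` on `X` and `c λ ^ N > 2` for some `N`, every orbit segment of `f₀` of
length `N` inside `X` has derivative product of modulus `> 2`. By compactness of
`X ^ ℕ × [-1, 1] ^ ℕ`, the same holds for `δ`-pseudo-orbits of `f₀` when each factor `f₀'(zᵢ)` is
perturbed by at most `δ`; orbits of a map `f` that is `C¹`-close to `f₀`, with the factors `f'(zᵢ)`,
are of this kind. Cutting an orbit of `f` into blocks of length `N`, each contributing at least
`2`, and bounding the last, shorter block by the one-step bound `min (c λ / 2) 1`, gives
expansion with `λ₀ = 2 ^ (1 / N)`.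
-/

open Finset Function Filter

theorem IsCompact.exists_pos_forall_lt_of_le_zero {α : Type*} [TopologicalSpace α] [T2Space α]
    {K : Set α} (hK : IsCompact K) {G H : α → ℝ} (hG : ContinuousOn G K) (hH : ContinuousOn H K)
    {a : ℝ} (h : ∀ z ∈ K, H z ≤ 0 → a < G z) :
    ∃ δ > 0, ∀ z ∈ K, H z < δ → a < G z := by
  -- `H` has a positive minimum on the compact set where `G ≤ a`
  set S := K ∩ G ⁻¹' Set.Iic a
  have hS : IsCompact S := hK.of_isClosed_subset
    (hG.preimage_isClosed_of_isClosed hK.isClosed isClosed_Iic) Set.inter_subset_left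
  rcases S.eq_empty_or_nonempty with hSe | hSne
  · exact ⟨1, one_pos, fun z hz _ => lt_of_not_ge fun hGz => hSe.subset ⟨hz, hGz⟩⟩
  · obtain ⟨w, ⟨hwK, hwa⟩, hmin⟩ := hS.exists_isMinOn hSne (hH.mono Set.inter_subset_left)
    exact ⟨H w, lt_of_not_ge fun h0 => (h w hwK h0).not_ge hwa,
      fun z hz hzw => lt_of_not_ge fun hGz => (hmin ⟨hz, hGz⟩).not_gt hzw⟩

theorem IsCompact.abs_le_of_iSup_add_iSup_le {α : Type*} [TopologicalSpace α] {X : Set α}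
    (hX : IsCompact X) {u v : α → ℝ} (hu : ContinuousOn u X) (hv : ContinuousOn v X) {ε : ℝ}
    (h : (⨆ x : X, |u x|) + (⨆ x : X, |v x|) ≤ ε) :
    ∀ y ∈ X, |u y| ≤ ε ∧ |v y| ≤ ε := by
  intro y hy
  have le_iSup : ∀ {w : α → ℝ}, ContinuousOn w X → |w y| ≤ ⨆ x : X, |w x| := fun hw =>
    le_ciSup (f := fun x : X => |_|) (Set.image_eq_range _ X ▸ hX.bddAbove_image hw.abs) ⟨y, hy⟩
  have hu0 : 0 ≤ ⨆ x : X, |u x| := Real.iSup_nonneg fun _ => abs_nonneg _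
  have hv0 : 0 ≤ ⨆ x : X, |v x| := Real.iSup_nonneg fun _ => abs_nonneg _
  exact ⟨by linarith [le_iSup hu], by linarith [le_iSup hv]⟩

theorem eq_iterate_of_forall_succ_eq {α : Type*} {g : α → α} {N : ℕ} {z : ℕ → α}
    (hz : ∀ i, i + 1 < N → z (i + 1) = g (z i)) : ∀ i < N, z i = g^[i] (z 0) := by
  intro i
  induction i with
  | zero => simp
  | succ k ih =>
    intro hk
    rw [iterate_succ_apply', ← ih (by omega), hz k hk]

section PseudoOrbit

variable {X : Set ℝ} {g g' : ℝ → ℝ} {N : ℕ} {a : ℝ}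

def orbitDefect (g : ℝ → ℝ) (N : ℕ) (z w : ℕ → ℝ) : ℝ :=
  ∑ i ∈ range (N - 1), |z (i + 1) - g (z i)| + ∑ i ∈ range N, |w i|

theorem orbitDefect_le {z w : ℕ → ℝ} {δ : ℝ} (hw : ∀ i, |w i| ≤ δ)
    (hz : ∀ i, i + 1 < N → |z (i + 1) - g (z i)| ≤ δ) : orbitDefect g N z w ≤ 2 * N * δ := by
  have h₁ := sum_le_card_nsmul (range (N - 1)) (fun i => |z (i + 1) - g (z i)|) δ
    fun i hi => hz i (by rw [mem_range] at hi; omega)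
  have h₂ := sum_le_card_nsmul (range N) (fun i => |w i|) δ fun i _ => hw i
  have hδ : 0 ≤ δ := (abs_nonneg _).trans (hw 0)
  have hN : ((N - 1 : ℕ) : ℝ) ≤ N := by exact_mod_cast N.sub_le 1
  simp only [card_range, nsmul_eq_mul] at h₁ h₂
  unfold orbitDefect
  nlinarith

theorem eq_zero_and_eq_iterate_of_orbitDefect_nonpos {z w : ℕ → ℝ}
    (h : orbitDefect g N z w ≤ 0) : (∀ i < N, w i = 0) ∧ ∀ i < N, z i = g^[i] (z 0) := by
  have h₁ := sum_nonneg fun i (_ : i ∈ range (N - 1)) => abs_nonneg (z (i + 1) - g (z i))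
  have h₂ := sum_nonneg fun i (_ : i ∈ range N) => abs_nonneg (w i)
  unfold orbitDefect at h
  refine ⟨fun i hi => abs_nonpos_iff.mp ?_, eq_iterate_of_forall_succ_eq fun i hi => ?_⟩
  · exact (single_le_sum (fun j _ => abs_nonneg (w j)) (mem_range.mpr hi)).trans (by linarith)
  · refine sub_eq_zero.mp (abs_nonpos_iff.mp ((single_le_sum
      (f := fun j => |z (j + 1) - g (z j)|) (fun j _ => abs_nonneg _)
      (mem_range.mpr (by omega : i < N - 1))).trans (by linarith)))

theorem exists_pos_lt_abs_prod_of_pseudoOrbit (hX : IsCompact X) (hg : ContinuousOn g X)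
    (hg' : ContinuousOn g' X)
    (horbit : ∀ x, (∀ k < N, g^[k] x ∈ X) → a < |∏ k ∈ range N, g' (g^[k] x)|) :
    ∃ δ > 0, ∀ z w : ℕ → ℝ, (∀ i, z i ∈ X) → (∀ i, |w i| ≤ δ) →
      (∀ i, i + 1 < N → |z (i + 1) - g (z i)| ≤ δ) →
        a < |∏ i ∈ range N, (g' (z i) + w i)| := by
  set K : Set ((ℕ → ℝ) × (ℕ → ℝ)) :=
    (Set.univ.pi fun _ => X) ×ˢ Set.univ.pi fun _ => Set.Icc (-1) 1
  have hK : IsCompact K :=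
    (isCompact_univ_pi fun _ => hX).prod (isCompact_univ_pi fun _ => isCompact_Icc)
  have hKX : ∀ i, Set.MapsTo (fun p : (ℕ → ℝ) × (ℕ → ℝ) => p.1 i) K X :=
    fun i _ hp => hp.1 i trivial
  have hG : ContinuousOn (fun p => |∏ i ∈ range N, (g' (p.1 i) + p.2 i)|) K :=
    (continuousOn_finsetProd _ fun i _ => (hg'.comp (by fun_prop) (hKX i)).add (by fun_prop)).abs
  have hH : ContinuousOn (fun p => orbitDefect g N p.1 p.2) K :=
    (continuousOn_finsetSum _ fun i _ => ((by fun_prop : Continuous fun p => p.1 (i + 1))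
      |>.continuousOn.sub (hg.comp (by fun_prop) (hKX i))).abs).add (by fun_prop)
  obtain ⟨δ, hδ, hδK⟩ := hK.exists_pos_forall_lt_of_le_zero hG hH fun p hp hp0 => by
    obtain ⟨hw, hz⟩ := eq_zero_and_eq_iterate_of_orbitDefect_nonpos hp0
    calc a < |∏ k ∈ range N, g' (g^[k] (p.1 0))| :=
          horbit (p.1 0) fun k hk => hz k hk ▸ hp.1 k trivial
      _ = |∏ i ∈ range N, (g' (p.1 i) + p.2 i)| := by
        refine congrArg _ (prod_congr rfl fun i hi => ?_)
        rw [hw i (mem_range.mp hi), add_zero, hz i (mem_range.mp hi)]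
  set δ' := min 1 (δ / (2 * N + 1))
  have hδ' : 0 < δ' := lt_min one_pos (by positivity)
  have hδ'δ : (2 * N + 1) * δ' ≤ δ := by
    rw [← le_div_iff₀' (by positivity)]; exact min_le_right _ _
  refine ⟨δ', hδ', fun z w hz hw hzg => hδK (z, w) ⟨fun i _ => hz i, fun i _ => ?_⟩ ?_⟩
  · exact abs_le.mp ((hw i).trans (min_le_left _ _))
  · linarith [orbitDefect_le hw hzg]

theorem exists_pos_lt_abs_prod_iterate_of_close (hX : IsCompact X) (hg : ContinuousOn g X)
    (hg' : ContinuousOn g' X) (hN : 0 < N)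
    (horbit : ∀ x, (∀ k < N, g^[k] x ∈ X) → a < |∏ k ∈ range N, g' (g^[k] x)|) :
    ∃ δ > 0, ∀ f f' : ℝ → ℝ, (∀ y ∈ X, |g y - f y| ≤ δ ∧ |g' y - f' y| ≤ δ) →
      ∀ x, (∀ k < N, f^[k] x ∈ X) → a < |∏ k ∈ range N, f' (f^[k] x)| := by
  obtain ⟨δ, hδ, hpseudo⟩ := exists_pos_lt_abs_prod_of_pseudoOrbit hX hg hg' horbit
  refine ⟨δ, hδ, fun f f' hclose x hx => ?_⟩
  -- freezing the orbit after `N - 1` steps keeps every coordinate in `X`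
  set z : ℕ → ℝ := fun i => f^[min i (N - 1)] x
  have hzX : ∀ i, z i ∈ X := fun i => hx _ (by omega)
  have hz : ∀ i < N, z i = f^[i] x := fun i hi => by
    simp only [z, Nat.min_eq_left (by omega : i ≤ N - 1)]
  have key := hpseudo z (fun i => f' (z i) - g' (z i)) hzX
    (fun i => abs_sub_comm (g' _) _ ▸ (hclose _ (hzX i)).2)
    (fun i hi => by
      rw [hz (i + 1) hi, hz i (by omega), iterate_succ_apply', abs_sub_comm]
      exact (hclose _ (hx i (by omega))).1)
  refine key.trans_eq (congrArg _ (prod_congr rfl fun i hi => ?_))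
  rw [hz i (mem_range.mp hi)]
  ring

end PseudoOrbit

theorem le_prod_abs_iterate_of_le_prod_block {α : Type*} {F : α → α} {φ : α → ℝ} {S : Set α}
    {N : ℕ} (hN : 0 < N) {m ρ : ℝ} (hm : 0 < m) (hm1 : m ≤ 1) (hρ : 1 ≤ ρ)
    (hstep : ∀ y ∈ S, m ≤ |φ y|)
    (hblock : ∀ y, (∀ k < N, F^[k] y ∈ S) → ρ ^ N ≤ ∏ k ∈ range N, |φ (F^[k] y)|) :
    ∀ n y, (∀ k < n, F^[k] y ∈ S) → (m / ρ) ^ N * ρ ^ n ≤ ∏ k ∈ range n, |φ (F^[k] y)| := by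
  have hρ0 : 0 < ρ := one_pos.trans_le hρ
  intro n
  induction n using Nat.strong_induction_on with
  | _ n ih =>
    intro y hy
    rcases lt_or_ge n N with hnN | hNn
    · calc (m / ρ) ^ N * ρ ^ n ≤ (m / ρ) ^ N * ρ ^ N := by gcongr
        _ = m ^ N := by rw [← mul_pow, div_mul_cancel₀ _ hρ0.ne']
        _ ≤ m ^ n := pow_le_pow_of_le_one hm.le hm1 hnN.le
        _ = ∏ k ∈ range n, m := by rw [prod_const, card_range]
        _ ≤ ∏ k ∈ range n, |φ (F^[k] y)| :=
          prod_le_prod (fun _ _ => hm.le) fun k hk => hstep _ (hy k (mem_range.mp hk))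
    · obtain ⟨j, rfl⟩ : ∃ j, n = N + j := ⟨n - N, by omega⟩
      have hrest := ih j (by omega) (F^[N] y) fun k hk => by
        rw [← iterate_add_apply]; exact hy _ (by omega)
      calc (m / ρ) ^ N * ρ ^ (N + j) = ρ ^ N * ((m / ρ) ^ N * ρ ^ j) := by ring
        _ ≤ (∏ k ∈ range N, |φ (F^[k] y)|) * ∏ k ∈ range j, |φ (F^[k] (F^[N] y))| :=
          mul_le_mul (hblock y fun k hk => hy k (by omega)) hrest (by positivity)
            (prod_nonneg fun _ _ => abs_nonneg _)
        _ = ∏ k ∈ range (N + j), |φ (F^[k] y)| := by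
          rw [prod_range_add]
          simp only [← iterate_add_apply, Nat.add_comm]

theorem stmt2_general (X : Set ℝ) (hXc : IsCompact X)
    (f₀ f₀' : ℝ → ℝ) (hf₀d : ∀ x ∈ X, HasDerivWithinAt f₀ (f₀' x) X x)
    (hf₀c : ContinuousOn f₀' X)
    (c lam : ℝ) (hc : 0 < c) (hlam : 1 < lam)
    (hexp : ∀ n, 1 ≤ n → ∀ x, (∀ k < n, f₀^[k] x ∈ X) →
      c * lam ^ n ≤ |∏ k ∈ Finset.range n, f₀' (f₀^[k] x)|) :
    ∃ ε₀ > (0:ℝ), ∃ c₀ > (0:ℝ), ∃ lam₀ > (1:ℝ), ∀ f f' : ℝ → ℝ,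
      (∀ x ∈ X, HasDerivWithinAt f (f' x) X x) → ContinuousOn f' X →
      Set.MapsTo f X (Set.Icc 0 1) →
      (⨆ x : X, |f₀ x - f x|) + (⨆ x : X, |f₀' x - f' x|) ≤ ε₀ →
      ∀ n, 1 ≤ n → ∀ x ∈ X, (∀ k < n, f^[k] x ∈ X) →
        c₀ * lam₀ ^ n ≤ |∏ k ∈ Finset.range n, f' (f^[k] x)| := by
  have hf₀X : ContinuousOn f₀ X := fun x hx => (hf₀d x hx).continuousWithinAt
  have hcl : 0 < c * lam := mul_pos hc (one_pos.trans hlam)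
  have hstep₀ : ∀ y ∈ X, c * lam ≤ |f₀' y| := fun y hy => by
    simpa using hexp 1 le_rfl y fun k hk => by simpa [Nat.lt_one_iff.mp hk] using hy
  obtain ⟨N, hN, hNlam⟩ := ((eventually_ge_atTop 1).and
    ((tendsto_pow_atTop_atTop_of_one_lt hlam).eventually_gt_atTop (2 / c))).exists
  have hblock₀ : ∀ x, (∀ k < N, f₀^[k] x ∈ X) → 2 < |∏ k ∈ range N, f₀' (f₀^[k] x)| :=
    fun x hx => ((div_lt_iff₀' hc).mp hNlam).trans_le (hexp N hN x hx)
  obtain ⟨δ, hδ, hblock⟩ := exists_pos_lt_abs_prod_iterate_of_close hXc hf₀X hf₀c hN hblock₀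
  set m := min (c * lam / 2) 1
  have hm : 0 < m := lt_min (by positivity) one_pos
  set ρ := (2 : ℝ) ^ (N⁻¹ : ℝ)
  have hρ : 1 < ρ := Real.one_lt_rpow one_lt_two (by positivity)
  have hρN : ρ ^ N = 2 := Real.rpow_inv_natCast_pow zero_le_two (by omega)
  refine ⟨min δ (c * lam / 2), lt_min hδ (by positivity), (m / ρ) ^ N, by positivity, ρ, hρ,
    fun f f' hfd hfc _ hsup n _ x _ horb => ?_⟩
  have hfX : ContinuousOn f X := fun x hx => (hfd x hx).continuousWithinAt
  have hclose := hXc.abs_le_of_iSup_add_iSup_le (hf₀X.sub hfX) (hf₀c.sub hfc) hsup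
  have hstep : ∀ y ∈ X, m ≤ |f' y| := fun y hy => by
    have hy' : |f₀' y - f' y| ≤ c * lam / 2 := (hclose y hy).2.trans (min_le_right _ _)
    linarith [min_le_left (c * lam / 2) 1, hstep₀ y hy, abs_sub_abs_le_abs_sub (f₀' y) (f' y)]
  rw [abs_prod]
  refine le_prod_abs_iterate_of_le_prod_block (by omega) hm (min_le_right _ _) hρ.le hstep
    (fun y hy => ?_) n x horb
  rw [hρN, ← abs_prod]
  exact (hblock f f' (fun y hy => (hclose y hy).imp (le_trans · (min_le_left _ _))
    (le_trans · (min_le_left _ _))) y hy).le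

theorem stmt2 (X : Set ℝ) (hXc : IsCompact X) (hX1 : X ⊆ Set.Icc 0 1)
    (f₀ f₀' : ℝ → ℝ) (hf₀d : ∀ x ∈ X, HasDerivWithinAt f₀ (f₀' x) X x)
    (hf₀c : ContinuousOn f₀' X) (hf₀m : Set.MapsTo f₀ X (Set.Icc 0 1))
    (c lam : ℝ) (hc : 0 < c) (hlam : 1 < lam)
    (hexp : ∀ n, 1 ≤ n → ∀ x, (∀ k < n, f₀^[k] x ∈ X) →
      c * lam ^ n ≤ |∏ k ∈ Finset.range n, f₀' (f₀^[k] x)|) :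
    ∃ ε₀ > (0:ℝ), ∃ c₀ > (0:ℝ), ∃ lam₀ > (1:ℝ), ∀ f f' : ℝ → ℝ,
      (∀ x ∈ X, HasDerivWithinAt f (f' x) X x) → ContinuousOn f' X →
      Set.MapsTo f X (Set.Icc 0 1) →
      (⨆ x : X, |f₀ x - f x|) + (⨆ x : X, |f₀' x - f' x|) ≤ ε₀ →
      ∀ n, 1 ≤ n → ∀ x ∈ X, (∀ k < n, f^[k] x ∈ X) →
        c₀ * lam₀ ^ n ≤ |∏ k ∈ Finset.range n, f' (f^[k] x)| :=
  stmt2_general X hXc f₀ f₀' hf₀d hf₀c c lam hc hlam hexp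
end

section
/- Let f₀ ∈ ℰ be of class C² with bounded distortion constant M₀ > 1. Then for every i ∈ {1,…,p−1}, every n ≥ 1 and every word a₀⋯a_{n-1}, the gap proportion satisfies Δ^{(i)}_{a₀⋯a_{n-1}}(f₀) ≤ K(f₀), where Δ^{(i)} = |X_{a₀⋯a_{n-1}î}| / |X_{a₀⋯a_{n-1}□_i}| − 1 and K(f₀) = max_{1≤i≤p−1} (1 − M₀^{-1}(α_i − β_{i-1})) / (M₀^{-1}(α_i − β_{i-1})). -/
open MeasureTheory

/-- The cylinder interval `X_{a₀⋯a_{n-1}}(f)`. -/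
def Xcyl (f : ℝ → ℝ) (α β : ℕ → ℝ) (a : ℕ → ℕ) (n : ℕ) : Set ℝ :=
  {x | ∀ k < n, f^[k] x ∈ Set.Icc (α (a k)) (β (a k))}

/-- The gap `X_{a₀⋯a_{n-1}□_i}(f) = {x ∈ X_{a₀⋯a_{n-1}}(f) : f^n(x) ∈ (β_{i-1}, α_i)}`. -/
def Xgap (f : ℝ → ℝ) (α β : ℕ → ℝ) (a : ℕ → ℕ) (n i : ℕ) : Set ℝ :=
  {x ∈ Xcyl f α β a n | f^[n] x ∈ Set.Ioo (β (i - 1)) (α i)}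

/-- `X_{a₀⋯a_{n-1}î}(f) = {x ∈ X_{a₀⋯a_{n-1}}(f) : f^n(x) ∈ [α_{i-1}, β_i]}`. -/
def Xhat (f : ℝ → ℝ) (α β : ℕ → ℝ) (a : ℕ → ℕ) (n i : ℕ) : Set ℝ :=
  {x ∈ Xcyl f α β a n | f^[n] x ∈ Set.Icc (α (i - 1)) (β i)}

/-- Length of a (bounded) set of reals. -/
noncomputable def len (S : Set ℝ) : ℝ := (volume S).toReal

/-! Write `D = |(fⁿ)'|` on the cylinder `X_w`, on which `fⁿ` is injective. By the change of
variables formula, `fⁿ` maps the gap onto `(β_{i-1}, α_i)` and `X_{wî}` into `[0, 1]`, so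
`α_i - β_{i-1} ≤ ∫_{X_{w□_i}} D` and `∫_{X_{wî}} D ≤ 1`. Bounded distortion gives
`D y ≤ M₀ D x` for all `x, y ∈ X_w`; integrating in `y` over the gap and in `x` over `X_{wî}`
yields `(α_i - β_{i-1}) |X_{wî}| ≤ M₀ |X_{w□_i}|`, i.e. `Δ + 1 ≤ M₀ / (α_i - β_{i-1})`. -/

open Set

lemma volume_image_eq_setLIntegral_abs_deriv {g g' : ℝ → ℝ} {s : Set ℝ}
    (hs : MeasurableSet s) (hg : ∀ x ∈ s, HasDerivWithinAt g (g' x) s x) (hinj : InjOn g s) :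
    volume (g '' s) = ∫⁻ x in s, ENNReal.ofReal |g' x| := by
  simpa [ContinuousLinearMap.det_toSpanSingleton, setLIntegral_one] using
    lintegral_image_eq_lintegral_abs_det_fderiv_mul volume hs
      (fun x hx => (hg x hx).hasFDerivWithinAt) hinj 1

lemma volume_image_mul_volume_le {g g' : ℝ → ℝ} {U S T : Set ℝ} {M : ℝ}
    (hg : ∀ x ∈ U, HasDerivWithinAt g (g' x) U x) (hinj : InjOn g U)
    (hSU : S ⊆ U) (hTU : T ⊆ U) (hS : MeasurableSet S) (hT : MeasurableSet T)
    (hTfin : volume T ≠ ⊤) (hD : ∀ x ∈ S, ∀ y ∈ T, |g' y| ≤ M * |g' x|) :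
    volume (g '' T) * volume S ≤ ENNReal.ofReal M * volume T * volume (g '' S) := by
  have hvol : ∀ {V}, V ⊆ U → MeasurableSet V →
      volume (g '' V) = ∫⁻ x in V, ENNReal.ofReal |g' x| := fun hVU hV =>
    volume_image_eq_setLIntegral_abs_deriv hV (fun x hx => (hg x (hVU hx)).mono hVU)
      (hinj.mono hVU)
  have himage_T : ∀ x ∈ S,
      volume (g '' T) ≤ ENNReal.ofReal M * volume T * ENNReal.ofReal |g' x| := fun x hx =>
    calc volume (g '' T) = ∫⁻ y in T, ENNReal.ofReal |g' y| := hvol hTU hT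
      _ ≤ ∫⁻ _ in T, ENNReal.ofReal M * ENNReal.ofReal |g' x| := setLIntegral_mono' hT
          fun y hy => (ENNReal.ofReal_le_ofReal (hD x hx y hy)).trans_eq
            (ENNReal.ofReal_mul' (abs_nonneg _))
      _ = ENNReal.ofReal M * volume T * ENNReal.ofReal |g' x| := by
          rw [setLIntegral_const, mul_right_comm]
  calc volume (g '' T) * volume S = ∫⁻ _ in S, volume (g '' T) := (setLIntegral_const S _).symm
    _ ≤ ∫⁻ x in S, ENNReal.ofReal M * volume T * ENNReal.ofReal |g' x| :=
        setLIntegral_mono' hS himage_T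
    _ = ENNReal.ofReal M * volume T * volume (g '' S) := by
        rw [lintegral_const_mul' _ _ (ENNReal.mul_ne_top ENNReal.ofReal_ne_top hTfin),
          hvol hSU hS]

lemma Set.OrdConnected.inter_preimage_of_monotoneOn_or_antitoneOn {g : ℝ → ℝ} {s J : Set ℝ}
    (hs : s.OrdConnected) (hJ : J.OrdConnected) (hg : MonotoneOn g s ∨ AntitoneOn g s) :
    (s ∩ g ⁻¹' J).OrdConnected := by
  obtain ⟨u, hu, hsu⟩ := hg.elim hJ.preimage_monotoneOn hJ.preimage_antitoneOn
  exact hsu ▸ hs.inter hu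

section Cylinders

variable {f f' : ℝ → ℝ} {α β : ℕ → ℝ} {a : ℕ → ℕ}

lemma Xcyl_succ (n : ℕ) :
    Xcyl f α β a (n + 1) = Xcyl f α β a n ∩ f^[n] ⁻¹' Icc (α (a n)) (β (a n)) := by
  ext x
  simp only [Xcyl, mem_inter_iff, mem_ofPred_eq, mem_preimage, Nat.forall_lt_succ_right]

lemma Xcyl_succ_inter_preimage (n : ℕ) (J : Set ℝ) :
    Xcyl f α β a (n + 1) ∩ f^[n + 1] ⁻¹' J =
      Xcyl f α β a n ∩ f^[n] ⁻¹' (Icc (α (a n)) (β (a n)) ∩ f ⁻¹' J) := by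
  rw [Xcyl_succ, Function.iterate_succ', preimage_comp, preimage_inter, inter_assoc]

lemma ordConnected_Xcyl_inter_preimage
    (hmono : ∀ k, MonotoneOn f (Icc (α (a k)) (β (a k))) ∨
      AntitoneOn f (Icc (α (a k)) (β (a k))))
    (n : ℕ) {J : Set ℝ} (hJ : J.OrdConnected) :
    (Xcyl f α β a n ∩ f^[n] ⁻¹' J).OrdConnected := by
  induction n generalizing J with
  | zero => simpa [Xcyl] using hJ
  | succ n ih =>
    rw [Xcyl_succ_inter_preimage]
    exact ih (ordConnected_Icc.inter_preimage_of_monotoneOn_or_antitoneOn hJ (hmono n))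

lemma injOn_iterate_Xcyl (hinj : ∀ k, InjOn f (Icc (α (a k)) (β (a k)))) (n : ℕ) :
    InjOn f^[n] (Xcyl f α β a n) := by
  induction n with
  | zero => exact injOn_id _
  | succ n ih =>
    rw [Xcyl_succ, Function.iterate_succ']
    exact (hinj n).comp (ih.mono inter_subset_left) fun _ hx => hx.2

lemma hasDerivWithinAt_iterate_Xcyl
    (hder : ∀ k, ∀ x ∈ Icc (α (a k)) (β (a k)),
      HasDerivWithinAt f (f' x) (Icc (α (a k)) (β (a k))) x)
    (n : ℕ) : ∀ x ∈ Xcyl f α β a n,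
      HasDerivWithinAt f^[n] (∏ k ∈ Finset.range n, f' (f^[k] x)) (Xcyl f α β a n) x := by
  induction n with
  | zero => intro x _; simpa using hasDerivWithinAt_id x _
  | succ n ih =>
    intro x hx
    rw [Xcyl_succ] at hx ⊢
    rw [Function.iterate_succ', Finset.prod_range_succ, mul_comm]
    exact (hder n _ hx.2).comp x ((ih x hx.1).mono inter_subset_left) fun _ hy => hy.2

lemma surjOn_iterate_Xcyl (hsurj : ∀ k, SurjOn f (Icc (α (a k)) (β (a k))) (Icc 0 1))
    (hunit : ∀ k, Icc (α (a k)) (β (a k)) ⊆ Icc 0 1) (n : ℕ) :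
    SurjOn f^[n] (Xcyl f α β a n) (Icc 0 1) := by
  induction n with
  | zero => intro y _; exact ⟨y, fun k hk => absurd hk k.not_lt_zero, rfl⟩
  | succ n ih =>
    intro y hy
    obtain ⟨z, hz, rfl⟩ := hsurj n hy
    obtain ⟨x, hx, rfl⟩ := ih (hunit n hz)
    refine ⟨x, ?_, Function.iterate_succ_apply' f n x⟩
    rw [Xcyl_succ]
    exact ⟨hx, hz⟩

lemma volume_mul_volume_Xcyl_inter_preimage_le
    (hinj : ∀ k, InjOn f (Icc (α (a k)) (β (a k))))
    (hmono : ∀ k, MonotoneOn f (Icc (α (a k)) (β (a k))) ∨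
      AntitoneOn f (Icc (α (a k)) (β (a k))))
    (hder : ∀ k, ∀ x ∈ Icc (α (a k)) (β (a k)),
      HasDerivWithinAt f (f' x) (Icc (α (a k)) (β (a k))) x)
    (hsurj : ∀ k, SurjOn f (Icc (α (a k)) (β (a k))) (Icc 0 1))
    (hunit : ∀ k, Icc (α (a k)) (β (a k)) ⊆ Icc 0 1)
    {n : ℕ} (hn : n ≠ 0) {M : ℝ}
    (hdist : ∀ x ∈ Xcyl f α β a n, ∀ y ∈ Xcyl f α β a n,
      |∏ k ∈ Finset.range n, f' (f^[k] y)| ≤ M * |∏ k ∈ Finset.range n, f' (f^[k] x)|)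
    {I J : Set ℝ} (hI : I.OrdConnected) (hJ : J.OrdConnected)
    (hI01 : I ⊆ Icc 0 1) (hJ01 : J ⊆ Icc 0 1) :
    volume J * volume (Xcyl f α β a n ∩ f^[n] ⁻¹' I) ≤
      ENNReal.ofReal M * volume (Xcyl f α β a n ∩ f^[n] ⁻¹' J) := by
  set S := Xcyl f α β a n ∩ f^[n] ⁻¹' I
  set T := Xcyl f α β a n ∩ f^[n] ⁻¹' J
  have hJ_image : J ⊆ f^[n] '' T := by
    rw [image_inter_preimage]
    exact subset_inter ((surjOn_iterate_Xcyl hsurj hunit n).mono subset_rfl hJ01) subset_rfl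
  have hT_fin : volume T ≠ ⊤ :=
    ((measure_mono fun x hx => hx.1 0 (Nat.pos_of_ne_zero hn)).trans_lt measure_Icc_lt_top).ne
  calc volume J * volume S ≤ volume (f^[n] '' T) * volume S := by gcongr
    _ ≤ ENNReal.ofReal M * volume T * volume (f^[n] '' S) :=
        volume_image_mul_volume_le (hasDerivWithinAt_iterate_Xcyl hder n)
          (injOn_iterate_Xcyl hinj n) inter_subset_left inter_subset_left
          (ordConnected_Xcyl_inter_preimage hmono n hI).measurableSet
          (ordConnected_Xcyl_inter_preimage hmono n hJ).measurableSet hT_fin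
          fun x hx y hy => hdist x hx.1 y hy.1
    _ ≤ ENNReal.ofReal M * volume T * volume (Icc (0 : ℝ) 1) := by
        gcongr
        rintro _ ⟨x, hx, rfl⟩
        exact hI01 hx.2
    _ = ENNReal.ofReal M * volume T := by simp

end Cylinders

lemma len_div_len_le {S T : Set ℝ} {c M : ℝ} (hc : 0 < c) (hM : 0 ≤ M)
    (h : ENNReal.ofReal c * volume S ≤ ENNReal.ofReal M * volume T) :
    len S / len T ≤ M / c := by
  -- `len T = 0` includes the case `volume T = ⊤`, where `toReal` is junk.
  rcases (show 0 ≤ len T from ENNReal.toReal_nonneg).eq_or_lt with hT0 | hTpos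
  · rw [← hT0, div_zero]; positivity
  have hT : volume T ≠ ⊤ := (ENNReal.toReal_pos_iff.1 hTpos).2.ne
  have hreal : c * len S ≤ M * len T := by
    simpa [len, ENNReal.toReal_mul, hc.le, hM] using
      ENNReal.toReal_mono (ENNReal.mul_ne_top ENNReal.ofReal_ne_top hT) h
  rw [div_le_div_iff₀ hTpos hc]; linarith

lemma le_of_interlaced {p : ℕ} {α β : ℕ → ℝ} (hab : ∀ i < p, α i < β i)
    (hba : ∀ i, i + 1 < p → β i < α (i + 1)) {j k : ℕ} (hjk : j ≤ k) (hk : k < p) :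
    α j ≤ α k ∧ β j ≤ β k := by
  induction k, hjk using Nat.le_induction with
  | base => exact ⟨le_rfl, le_rfl⟩
  | succ k _ ih =>
    obtain ⟨hα, hβ⟩ := ih (by omega)
    have := hab k (by omega)
    have := hab (k + 1) hk
    have := hba k hk
    constructor <;> linarith

lemma Icc_subset_Icc_zero_one_of_interlaced {p : ℕ} {α β : ℕ → ℝ}
    (hab : ∀ i < p, α i < β i) (hba : ∀ i, i + 1 < p → β i < α (i + 1))
    (hα0 : α 0 = 0) (hβlast : β (p - 1) = 1) {j k : ℕ} (hjk : j ≤ k) (hk : k < p) :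
    Icc (α j) (β k) ⊆ Icc 0 1 :=
  Icc_subset_Icc (hα0 ▸ (le_of_interlaced hab hba j.zero_le (hjk.trans_lt hk)).1)
    (hβlast ▸ (le_of_interlaced hab hba (Nat.le_sub_one_of_lt hk) (by omega)).2)

lemma monotoneOn_or_antitoneOn_Icc_of_injOn {g g' : ℝ → ℝ} {x y : ℝ} (hxy : x ≤ y)
    (hg : ∀ t ∈ Icc x y, HasDerivWithinAt g (g' t) (Icc x y) t) (hinj : InjOn g (Icc x y)) :
    MonotoneOn g (Icc x y) ∨ AntitoneOn g (Icc x y) :=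
  (ContinuousOn.strictMonoOn_of_injOn_Icc' hxy (fun t ht => (hg t ht).continuousWithinAt)
    hinj).imp StrictMonoOn.monotoneOn StrictAntiOn.antitoneOn

theorem stmt6 (p : ℕ) (hp : 2 ≤ p) (α β : ℕ → ℝ) (X : Set ℝ)
    (hX : X = ⋃ i ∈ Finset.range p, Set.Icc (α i) (β i))
    (hab : ∀ i < p, α i < β i) (hba : ∀ i, i + 1 < p → β i < α (i + 1))
    (hα0 : α 0 = 0) (hβlast : β (p - 1) = 1)
    (f f' : ℝ → ℝ)
    (hder : ∀ x ∈ X, HasDerivWithinAt f (f' x) X x)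
    (hbr : ∀ i < p, Set.InjOn f (Set.Icc (α i) (β i)) ∧
      f '' Set.Icc (α i) (β i) = Set.Icc (0:ℝ) 1)
    -- `f` is C² with bounded distortion constant `M₀ > 1`
    (hnz : ∀ x ∈ X, f' x ≠ 0)
    (M₀ : ℝ) (hM₀ : 1 < M₀)
    (hdist : ∀ n, 1 ≤ n → ∀ a : ℕ → ℕ, (∀ k, a k < p) →
      ∀ x ∈ Xcyl f α β a n, ∀ y ∈ Xcyl f α β a n,
        |∏ k ∈ Finset.range n, f' (f^[k] x)| / |∏ k ∈ Finset.range n, f' (f^[k] y)| ≤ M₀) :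
    ∀ i, 1 ≤ i → i ≤ p - 1 → ∀ n, 1 ≤ n → ∀ a : ℕ → ℕ, (∀ k, a k < p) →
      len (Xhat f α β a n i) / len (Xgap f α β a n i) - 1 ≤
        (Finset.Icc 1 (p - 1)).sup' (Finset.nonempty_Icc.mpr (by omega))
          (fun j => (1 - M₀⁻¹ * (α j - β (j - 1))) / (M₀⁻¹ * (α j - β (j - 1)))) := by
  intro i hi hip n hn a ha
  have hunit {j k : ℕ} (hjk : j ≤ k) (hk : k < p) : Icc (α j) (β k) ⊆ Icc 0 1 :=
    Icc_subset_Icc_zero_one_of_interlaced hab hba hα0 hβlast hjk hk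
  have hbranch {j : ℕ} (hj : j < p) : Icc (α j) (β j) ⊆ X :=
    hX ▸ subset_biUnion_of_mem (u := fun j => Icc (α j) (β j)) (Finset.mem_range.2 hj)
  have hderI {j : ℕ} (hj : j < p) : ∀ x ∈ Icc (α j) (β j),
      HasDerivWithinAt f (f' x) (Icc (α j) (β j)) x := fun x hx =>
    (hder x (hbranch hj hx)).mono (hbranch hj)
  have hdist' : ∀ x ∈ Xcyl f α β a n, ∀ y ∈ Xcyl f α β a n,
      |∏ k ∈ Finset.range n, f' (f^[k] y)| ≤ M₀ * |∏ k ∈ Finset.range n, f' (f^[k] x)| := by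
    intro x hx y hy
    have hDx : 0 < |∏ k ∈ Finset.range n, f' (f^[k] x)| :=
      abs_pos.2 <| Finset.prod_ne_zero_iff.2 fun k hk =>
        hnz _ (hbranch (ha _) (hx k (Finset.mem_range.1 hk)))
    exact (div_le_iff₀ hDx).1 (hdist n hn a ha y hy x hx)
  have hgap : 0 < α i - β (i - 1) := by
    have := hba (i - 1) (by omega)
    rw [Nat.sub_add_cancel hi] at this
    linarith
  have hwindow : Icc (α (i - 1)) (β i) ⊆ Icc 0 1 := hunit (by omega) (by omega)
  have hkey := volume_mul_volume_Xcyl_inter_preimage_le (fun k => (hbr _ (ha k)).1)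
    (fun k => monotoneOn_or_antitoneOn_Icc_of_injOn (hab _ (ha k)).le (hderI (ha k))
      (hbr _ (ha k)).1)
    (fun k => hderI (ha k)) (fun k => (hbr _ (ha k)).2.ge) (fun k => hunit le_rfl (ha k))
    (by omega) hdist' ordConnected_Icc ordConnected_Ioo hwindow
    (Ioo_subset_Icc_self.trans <|
      (Icc_subset_Icc (hab _ (by omega)).le (hab _ (by omega)).le).trans hwindow)
  rw [Real.volume_Ioo] at hkey
  calc len (Xhat f α β a n i) / len (Xgap f α β a n i) - 1 ≤ M₀ / (α i - β (i - 1)) - 1 :=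
        sub_le_sub_right (len_div_len_le hgap (by linarith) hkey) 1
    _ = (1 - M₀⁻¹ * (α i - β (i - 1))) / (M₀⁻¹ * (α i - β (i - 1))) := by field_simp
    _ ≤ _ := Finset.le_sup'
        (fun j => (1 - M₀⁻¹ * (α j - β (j - 1))) / (M₀⁻¹ * (α j - β (j - 1))))
        (Finset.mem_Icc.2 ⟨hi, hip⟩)
end
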